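/- Let p : K → J be a surjective equivariant map of finite G-sets. Define p̄ : P(K) → P(J) by p̄(U) = J ∖ p(K ∖ U). Then p̄ is an order-preserving G-equivariant map, it restricts to a functor P(K) ∖ {K} → P(J) ∖ {J}, and this restriction is right G-cofinal: for every subgroup H ≤ G and every H-invariant proper subset U ⊊ J, the H-fixed under-poset (U/p̄)^H = {V ⊊ K : V H-invariant, U ⊆ p̄(V)} has K ∖ p^{-1}(J ∖ U) as an initial object. -/

import Mathlib

/-!
`p̄(V) = (p '' Vᶜ)ᶜ` is the upper adjoint of `U ↦ (p ⁻¹' Uᶜ)ᶜ = p ⁻¹' U`, since both conditions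
`U ⊆ p̄(V)` and `p ⁻¹' U ⊆ V` say that `p` maps `Vᶜ` into `Uᶜ`. Hence `p ⁻¹' U` is the least `V`
with `U ⊆ p̄(V)`; it is `H`-invariant when `U` is, by equivariance, and proper when `U` is, by
surjectivity, so it is the initial object of the fixed under-poset.
-/

open Pointwise Set

section ComplImageCompl

variable {K J : Type*}

theorem gc_compl_preimage_compl_compl_image_compl (p : K → J) :
    GaloisConnection (fun U : Set J => (p ⁻¹' Uᶜ)ᶜ) (fun V : Set K => (p '' Vᶜ)ᶜ) := fun U V => by
  rw [compl_subset_comm, ← image_subset_iff, subset_compl_comm]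

theorem compl_image_compl_ne_univ (p : K → J) {V : Set K} (hV : V ≠ univ) :
    (p '' Vᶜ)ᶜ ≠ univ := by
  rw [← nonempty_compl, compl_compl]
  exact (nonempty_compl.2 hV).image p

theorem compl_preimage_compl_ne_univ {p : K → J} (hp : Function.Surjective p) {U : Set J}
    (hU : U ≠ univ) : (p ⁻¹' Uᶜ)ᶜ ≠ univ := by
  rw [← nonempty_compl, compl_compl]
  exact (nonempty_compl.2 hU).preimage hp

variable {G F : Type*} [Group G] [MulAction G K] [MulAction G J] [FunLike F K J]
  [MulActionHomClass F G K J]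

theorem compl_image_compl_smul (f : F) (g : G) (V : Set K) :
    (f '' (g • V)ᶜ)ᶜ = g • (f '' Vᶜ)ᶜ := by
  rw [← smul_set_compl, image_smul_set, smul_set_compl]

theorem compl_preimage_compl_smul (f : F) (g : G) (U : Set J) :
    (f ⁻¹' (g • U)ᶜ)ᶜ = g • (f ⁻¹' Uᶜ)ᶜ := by
  simp only [preimage_compl, compl_compl, Group.preimage_smul_set]

end ComplImageCompl

theorem pbar_right_cofinal_general {G K J : Type} [Group G]
    [MulAction G K] [MulAction G J] (p : K → J) (hsurj : Function.Surjective p)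
    (hequiv : ∀ (g : G) (k : K), p (g • k) = g • p k) :
    (Monotone fun U : Set K => (p '' Uᶜ)ᶜ) ∧
    (∀ (g : G) (U : Set K), (p '' (g • U)ᶜ)ᶜ = g • (p '' Uᶜ)ᶜ) ∧
    (∀ U : Set K, U ≠ Set.univ → (p '' Uᶜ)ᶜ ≠ Set.univ) ∧
    (∀ (H : Subgroup G) (U : Set J), U ≠ Set.univ → (∀ h : H, (h : G) • U = U) →
      IsLeast {V : Set K | V ≠ Set.univ ∧ (∀ h : H, (h : G) • V = V) ∧ U ⊆ (p '' Vᶜ)ᶜ}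
        (p ⁻¹' Uᶜ)ᶜ) := by
  let f : K →[G] J := ⟨p, hequiv⟩
  have gc := gc_compl_preimage_compl_compl_image_compl p
  refine ⟨gc.monotone_u, compl_image_compl_smul f, fun _ => compl_image_compl_ne_univ p,
    fun H U hU hinv => ⟨⟨compl_preimage_compl_ne_univ hsurj hU, fun h => ?_, gc.le_u_l U⟩,
      fun V hV => gc.isLeast_l.2 hV.2.2⟩⟩
  have := compl_preimage_compl_smul f (h : G) U
  rwa [hinv h, eq_comm] at this

/-- For a surjective equivariant map `p : K → J` of finite `G`-sets, the
complement-dual direct image `p̄(U) = J ∖ p(K ∖ U)` is order-preserving and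
`G`-equivariant, restricts to proper subsets, and the restriction
`P(K)∖{K} → P(J)∖{J}` is right `G`-cofinal: for every subgroup `H ≤ G` and every
`H`-invariant proper `U ⊊ J`, the `H`-fixed under-poset of `H`-invariant proper `V ⊊ K`
with `U ⊆ p̄(V)` has `K ∖ p⁻¹(J ∖ U)` as a least (initial) element. -/
theorem pbar_right_cofinal {G K J : Type} [Group G] [Finite K] [Finite J]
    [MulAction G K] [MulAction G J] (p : K → J) (hsurj : Function.Surjective p)
    (hequiv : ∀ (g : G) (k : K), p (g • k) = g • p k) :
    (Monotone fun U : Set K => (p '' Uᶜ)ᶜ) ∧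
    (∀ (g : G) (U : Set K), (p '' (g • U)ᶜ)ᶜ = g • (p '' Uᶜ)ᶜ) ∧
    (∀ U : Set K, U ≠ Set.univ → (p '' Uᶜ)ᶜ ≠ Set.univ) ∧
    (∀ (H : Subgroup G) (U : Set J), U ≠ Set.univ → (∀ h : H, (h : G) • U = U) →
      IsLeast {V : Set K | V ≠ Set.univ ∧ (∀ h : H, (h : G) • V = V) ∧ U ⊆ (p '' Vᶜ)ᶜ}
        (p ⁻¹' Uᶜ)ᶜ) :=
  pbar_right_cofinal_general p hsurj hequiv
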